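/- arXiv:1111.5896 — 3 statements merged into one kernel-verified Lean document; each statement's English description precedes it below -/
import Mathlib

section
/- Let G be a finite simple graph on a vertex set V without isolated vertices, let 𝓛 be its normalized Laplacian acting on functions V → ℂ, and let ω ≥ 0. Then a function f : V → ℂ belongs to the Paley–Wiener space PW_ω(G) if and only if for every natural number n the Bernstein inequality ‖𝓛ⁿ f‖ ≤ ωⁿ·‖f‖ holds, where ‖g‖ = (∑_{v∈V} |g(v)|²)^{1/2}. -/
/-!
The normalized Laplacian is a positive operator for the standard inner product: it is symmetric
because the edge weights `1 / √(d u d v)` are, and `⟪𝓛 f, f⟫ ≥ 0` because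
`|f u| |f v| / √(d u d v) ≤ (|f u|² / d u + |f v|² / d v) / 2` and each vertex has `d v` neighbours.
Expand `f = ∑ cᵢ eᵢ` in an orthonormal eigenbasis, with eigenvalues `μᵢ ≥ 0`. Then
`‖𝓛ⁿ f‖² = ∑ μᵢ²ⁿ |cᵢ|²`, and `f ∈ PW_ω` iff `cᵢ = 0` whenever `μᵢ > ω`. In that case the Bernstein
inequality holds termwise; conversely `μᵢⁿ |cᵢ| ≤ ωⁿ ‖f‖` for all `n` forces `cᵢ = 0` once
`μᵢ > ω ≥ 0`.
-/

/-- The normalized Laplacian of a finite simple graph as a linear endomorphism of `V → ℂ`: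
`(𝓛 f) v = f v − ∑_{u ∼ v} f u / √(d u · d v)`. -/
noncomputable def nLapL {V : Type*} [Fintype V] (G : SimpleGraph V) [DecidableRel G.Adj] :
    (V → ℂ) →ₗ[ℂ] (V → ℂ) where
  toFun f := fun v =>
    f v - ∑ u ∈ G.neighborFinset v, f u / (Real.sqrt ((G.degree u : ℝ) * (G.degree v : ℝ)) : ℂ)
  map_add' f g := by
    funext v
    simp only [Pi.add_apply, add_div, Finset.sum_add_distrib]
    ring
  map_smul' a f := by
    funext v
    simp only [Pi.smul_apply, smul_eq_mul, RingHom.id_apply, mul_sub, Finset.mul_sum,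
      mul_div_assoc]

/-- The Paley–Wiener space `PW_ω(G)`: the span (supremum) of the eigenspaces of the normalized
Laplacian corresponding to (real) eigenvalues `μ ≤ ω`. -/
noncomputable def PW {V : Type*} [Fintype V] (G : SimpleGraph V) [DecidableRel G.Adj] (ω : ℝ) :
    Submodule ℂ (V → ℂ) :=
  ⨆ μ : ℝ, ⨆ _ : μ ≤ ω, Module.End.eigenspace (nLapL G) (μ : ℂ)

open ComplexConjugate Module.End Filter Topology

theorem Complex.re_conj_mul_div_sqrt_le (z w : ℂ) {s t : ℝ} (hs : 0 ≤ s) (ht : 0 ≤ t) :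
    (conj z * w).re / √(s * t) ≤ (‖z‖ ^ 2 / s + ‖w‖ ^ 2 / t) / 2 := by
  have hre : (conj z * w).re ≤ ‖z‖ * ‖w‖ := by
    simpa using Complex.re_le_norm (conj z * w)
  calc (conj z * w).re / √(s * t) ≤ ‖z‖ * ‖w‖ / √(s * t) := by gcongr
    _ = (‖z‖ / √s) * (‖w‖ / √t) := by rw [Real.sqrt_mul hs, div_mul_div_comm]
    _ ≤ ((‖z‖ / √s) ^ 2 + (‖w‖ / √t) ^ 2) / 2 := by
      linarith [two_mul_le_add_sq (‖z‖ / √s) (‖w‖ / √t)]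
    _ = (‖z‖ ^ 2 / s + ‖w‖ ^ 2 / t) / 2 := by
      rw [div_pow, div_pow, Real.sq_sqrt hs, Real.sq_sqrt ht]

theorem eq_zero_of_forall_pow_mul_le {a c r C : ℝ} (hr : 0 ≤ r) (hra : r < a) (hc : 0 ≤ c)
    (h : ∀ k : ℕ, a ^ k * c ≤ r ^ k * C) : c = 0 := by
  have ha : 0 < a := hr.trans_lt hra
  have hbound : ∀ k : ℕ, c ≤ (r / a) ^ k * C := fun k => by
    rw [div_pow, div_mul_eq_mul_div, le_div_iff₀ (by positivity), mul_comm]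
    exact h k
  have hlim : Tendsto (fun k : ℕ => (r / a) ^ k * C) atTop (𝓝 0) := by
    simpa using (tendsto_pow_atTop_nhds_zero_of_lt_one (div_nonneg hr ha.le)
      ((div_lt_one ha).2 hra)).mul_const C
  exact le_antisymm (ge_of_tendsto' hlim hbound) hc

theorem forall_sum_pow_mul_le_iff {ι : Type*} [Fintype ι] {a c : ι → ℝ} {r : ℝ}
    (ha : ∀ i, 0 ≤ a i) (hc : ∀ i, 0 ≤ c i) (hr : 0 ≤ r) :
    (∀ k : ℕ, ∑ i, a i ^ k * c i ≤ r ^ k * ∑ i, c i) ↔ ∀ i, r < a i → c i = 0 := by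
  constructor
  · intro h i hi
    refine eq_zero_of_forall_pow_mul_le (C := ∑ j, c j) hr hi (hc i) fun k => ?_
    exact (Finset.single_le_sum (f := fun j => a j ^ k * c j)
      (fun j _ => mul_nonneg (pow_nonneg (ha j) k) (hc j)) (Finset.mem_univ i)).trans (h k)
  · intro h k
    rw [Finset.mul_sum]
    refine Finset.sum_le_sum fun i _ => ?_
    rcases lt_or_ge r (a i) with hi | hi
    · simp [h i hi]
    · exact mul_le_mul_of_nonneg_right (pow_le_pow_left₀ (ha i) hi k) (hc i)

theorem Module.End.eigenspace_conjAlgEquiv {R M N : Type*} [CommRing R] [AddCommGroup M]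
    [Module R M] [AddCommGroup N] [Module R N] (e : M ≃ₗ[R] N) (f : Module.End R M) (μ : R) :
    eigenspace (e.conjAlgEquiv R f) μ = (eigenspace f μ).map (e : M →ₗ[R] N) := by
  ext y
  rw [Submodule.mem_map_equiv, mem_eigenspace_iff, mem_eigenspace_iff,
    LinearEquiv.conjAlgEquiv_apply, LinearMap.comp_apply, LinearMap.comp_apply,
    ← e.symm.injective.eq_iff]
  simp

namespace LinearMap.IsSymmetric

variable {𝕜 E : Type*} [RCLike 𝕜] [NormedAddCommGroup E] [InnerProductSpace 𝕜 E]
  [FiniteDimensional 𝕜 E] {T : E →ₗ[𝕜] E} (hT : T.IsSymmetric) {n : ℕ}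
  (hn : Module.finrank 𝕜 E = n)

theorem eigenvectorBasis_repr_pow_apply (k : ℕ) (x : E) (i : Fin n) :
    (hT.eigenvectorBasis hn).repr ((T ^ k) x) i =
      (hT.eigenvalues hn i : 𝕜) ^ k * (hT.eigenvectorBasis hn).repr x i := by
  induction k with
  | zero => simp
  | succ k ih =>
    rw [pow_succ', Module.End.mul_apply, hT.eigenvectorBasis_apply_self_apply, ih, pow_succ',
      mul_assoc]

theorem mem_iSup_eigenspace_iff (p : ℝ → Prop) (x : E) :
    x ∈ ⨆ (μ : ℝ) (_ : p μ), eigenspace T (μ : 𝕜) ↔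
      ∀ i, ¬ p (hT.eigenvalues hn i) → (hT.eigenvectorBasis hn).repr x i = 0 := by
  set b := hT.eigenvectorBasis hn
  have hb : ∀ i, b i ∈ eigenspace T (hT.eigenvalues hn i : 𝕜) := fun i =>
    (hT.hasEigenvector_eigenvectorBasis hn i).1
  constructor
  · intro hx i hi
    suffices ⨆ (μ : ℝ) (_ : p μ), eigenspace T (μ : 𝕜) ≤ (𝕜 ∙ b i)ᗮ by
      rw [b.repr_apply_apply, ← Submodule.mem_orthogonal_singleton_iff_inner_right]
      exact this hx
    refine iSup₂_le fun μ hμ y hy => Submodule.mem_orthogonal_singleton_iff_inner_right.2 ?_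
    have hne : (hT.eigenvalues hn i : 𝕜) ≠ μ :=
      RCLike.ofReal_injective.ne fun h => hi (h ▸ hμ)
    exact hT.orthogonalFamily_eigenspaces hne ⟨b i, hb i⟩ ⟨y, hy⟩
  · intro h
    rw [← b.sum_repr x]
    refine Submodule.sum_mem _ fun i _ => ?_
    by_cases hi : p (hT.eigenvalues hn i)
    · exact Submodule.smul_mem _ _
        (Submodule.mem_iSup_of_mem _ (Submodule.mem_iSup_of_mem hi (hb i)))
    · simp [h i hi]

end LinearMap.IsSymmetric

namespace LinearMap.IsPositive

variable {𝕜 E : Type*} [RCLike 𝕜] [NormedAddCommGroup E] [InnerProductSpace 𝕜 E]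
  [FiniteDimensional 𝕜 E] {T : E →ₗ[𝕜] E}

theorem mem_iSup_eigenspace_le_iff (hT : T.IsPositive) {ω : ℝ} (hω : 0 ≤ ω) (x : E) :
    x ∈ ⨆ (μ : ℝ) (_ : μ ≤ ω), eigenspace T (μ : 𝕜) ↔ ∀ k : ℕ, ‖(T ^ k) x‖ ≤ ω ^ k * ‖x‖ := by
  have hn : Module.finrank 𝕜 E = Module.finrank 𝕜 E := rfl
  rw [hT.isSymmetric.mem_iSup_eigenspace_iff hn]
  set b := hT.isSymmetric.eigenvectorBasis hn
  set μ := hT.isSymmetric.eigenvalues hn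
  have hμ : ∀ i, 0 ≤ μ i := hT.nonneg_eigenvalues hn
  have norm_sq_pow : ∀ k, ‖(T ^ k) x‖ ^ 2 = ∑ i, (μ i ^ 2) ^ k * ‖b.repr x i‖ ^ 2 := fun k => by
    rw [← b.repr.norm_map, EuclideanSpace.norm_sq_eq]
    refine Fintype.sum_congr _ _ fun i => ?_
    rw [hT.isSymmetric.eigenvectorBasis_repr_pow_apply hn, norm_mul, norm_pow,
      RCLike.norm_ofReal, abs_of_nonneg (hμ i), mul_pow, pow_right_comm]
  have norm_le_iff : ∀ k, ‖(T ^ k) x‖ ≤ ω ^ k * ‖x‖ ↔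
      ∑ i, (μ i ^ 2) ^ k * ‖b.repr x i‖ ^ 2 ≤ (ω ^ 2) ^ k * ∑ i, ‖b.repr x i‖ ^ 2 := fun k => by
    rw [← norm_sq_pow, ← pow_le_pow_iff_left₀ (norm_nonneg _) (by positivity) two_ne_zero,
      mul_pow, ← b.repr.norm_map x, EuclideanSpace.norm_sq_eq, pow_right_comm]
  simp_rw [norm_le_iff, forall_sum_pow_mul_le_iff (fun i => sq_nonneg (μ i))
    (fun i => sq_nonneg ‖b.repr x i‖) (sq_nonneg ω), not_le,
    pow_lt_pow_iff_left₀ hω (hμ _) two_ne_zero, sq_eq_zero_iff, norm_eq_zero]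

end LinearMap.IsPositive

namespace SimpleGraph

variable {V : Type*} [Fintype V] (G : SimpleGraph V) [DecidableRel G.Adj]

theorem sum_sum_neighborFinset_comm {M : Type*} [AddCommMonoid M] (F : V → V → M) :
    ∑ v, ∑ u ∈ G.neighborFinset v, F u v = ∑ v, ∑ u ∈ G.neighborFinset v, F v u :=
  Finset.sum_comm' fun v u => by simpa using G.adj_comm v u

theorem sum_sum_neighborFinset_div_degree_le (x : V → ℝ) (hx : ∀ v, 0 ≤ x v) :
    ∑ v, ∑ _u ∈ G.neighborFinset v, x v / G.degree v ≤ ∑ v, x v := by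
  refine Finset.sum_le_sum fun v _ => ?_
  rw [Finset.sum_const, card_neighborFinset_eq_degree, nsmul_eq_mul]
  rcases (G.degree v).eq_zero_or_pos with hd | hd
  · simp [hd, hx v]
  · rw [mul_div_cancel₀ _ (by positivity)]

end SimpleGraph

section nLapL

variable {V : Type*} [Fintype V] (G : SimpleGraph V) [DecidableRel G.Adj]

theorem sum_conj_nLapL_mul (f g : V → ℂ) :
    ∑ v, conj (nLapL G f v) * g v = ∑ v, conj (f v) * g v -
      ∑ v, ∑ u ∈ G.neighborFinset v,
        conj (f u) * g v / (√((G.degree u : ℝ) * G.degree v) : ℂ) := by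
  simp only [nLapL, LinearMap.coe_mk, AddHom.coe_mk, map_sub, map_sum, map_div₀,
    Complex.conj_ofReal, sub_mul, Finset.sum_mul, div_mul_eq_mul_div, Finset.sum_sub_distrib]

theorem conj_sum_conj_nLapL_mul_self (f : V → ℂ) :
    conj (∑ v, conj (nLapL G f v) * f v) = ∑ v, conj (nLapL G f v) * f v := by
  rw [sum_conj_nLapL_mul, map_sub, map_sum, map_sum]
  congr 1
  · simp [mul_comm]
  · rw [G.sum_sum_neighborFinset_comm]
    simp only [map_sum, map_div₀, map_mul, Complex.conj_conj, Complex.conj_ofReal, mul_comm]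

theorem re_sum_conj_nLapL_mul_self_nonneg (f : V → ℂ) :
    0 ≤ (∑ v, conj (nLapL G f v) * f v).re := by
  have hbound : ∑ v, ∑ u ∈ G.neighborFinset v,
      (conj (f u) * f v / (√((G.degree u : ℝ) * G.degree v) : ℂ)).re ≤ ∑ v, ‖f v‖ ^ 2 :=
    calc _ ≤ ∑ v, ∑ u ∈ G.neighborFinset v,
          (‖f u‖ ^ 2 / G.degree u + ‖f v‖ ^ 2 / G.degree v) / 2 := by
          gcongr with v _ u _
          rw [Complex.div_ofReal_re]
          exact Complex.re_conj_mul_div_sqrt_le _ _ (by positivity) (by positivity)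
      _ = ∑ v, ∑ _u ∈ G.neighborFinset v, ‖f v‖ ^ 2 / G.degree v := by
          simp only [add_div, Finset.sum_add_distrib]
          rw [G.sum_sum_neighborFinset_comm (fun u _ => ‖f u‖ ^ 2 / G.degree u / 2)]
          simp only [← Finset.sum_add_distrib, add_halves]
      _ ≤ ∑ v, ‖f v‖ ^ 2 :=
          G.sum_sum_neighborFinset_div_degree_le _ fun v => sq_nonneg _
  rw [sum_conj_nLapL_mul, Complex.sub_re, Complex.re_sum]
  simp only [Complex.re_sum, Complex.conj_mul', ← Complex.ofReal_pow, Complex.ofReal_re]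
  linarith

end nLapL

section nLapEuclidean

variable {V : Type*} [Fintype V] (G : SimpleGraph V) [DecidableRel G.Adj]

/-- `nLapL` transported to `EuclideanSpace ℂ V`, whose norm is the `ℓ²` norm of the statement
(the norm of `V → ℂ` is the sup norm). -/
noncomputable def nLapEuclidean : Module.End ℂ (EuclideanSpace ℂ V) :=
  (WithLp.linearEquiv 2 ℂ (V → ℂ)).symm.conjAlgEquiv ℂ (nLapL G)

theorem nLapEuclidean_pow_toLp (k : ℕ) (f : V → ℂ) :
    (nLapEuclidean G ^ k) (WithLp.toLp 2 f) = WithLp.toLp 2 ((nLapL G ^ k) f) := by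
  rw [nLapEuclidean, ← map_pow]
  rfl

theorem isPositive_nLapEuclidean : (nLapEuclidean G).IsPositive := by
  have hform : ∀ x, inner ℂ (nLapEuclidean G x) x = ∑ v, conj (nLapL G x.ofLp v) * x.ofLp v :=
    fun x => by simp only [PiLp.inner_apply, RCLike.inner_apply']; rfl
  refine (LinearMap.isPositive_iff_complex _).2 fun x => ⟨?_, ?_⟩
  · rw [hform, RCLike.re_to_complex, ← Complex.conj_eq_iff_re]
    exact conj_sum_conj_nLapL_mul_self G x.ofLp
  · rw [hform]
    exact re_sum_conj_nLapL_mul_self_nonneg G x.ofLp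

theorem mem_PW_iff_toLp_mem (ω : ℝ) (f : V → ℂ) :
    f ∈ PW G ω ↔
      WithLp.toLp 2 f ∈ ⨆ (μ : ℝ) (_ : μ ≤ ω), eigenspace (nLapEuclidean G) (μ : ℂ) := by
  simp only [nLapEuclidean, Module.End.eigenspace_conjAlgEquiv, ← Submodule.map_iSup,
    Submodule.mem_map_equiv]
  rfl

end nLapEuclidean

theorem mem_PW_iff_bernstein_general {V : Type*} [Fintype V] (G : SimpleGraph V)
    [DecidableRel G.Adj] (ω : ℝ) (hω : 0 ≤ ω) (f : V → ℂ) :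
    f ∈ PW G ω ↔ ∀ n : ℕ,
      Real.sqrt (∑ v, ‖(nLapL G ^ n) f v‖ ^ 2) ≤ ω ^ n * Real.sqrt (∑ v, ‖f v‖ ^ 2) := by
  refine (mem_PW_iff_toLp_mem G ω f).trans
    (((isPositive_nLapEuclidean G).mem_iSup_eigenspace_le_iff hω _).trans ?_)
  simp only [nLapEuclidean_pow_toLp, EuclideanSpace.norm_eq]

/-- `f ∈ PW_ω(G)` iff the Bernstein inequality `‖𝓛ⁿ f‖ ≤ ωⁿ‖f‖` holds for
every natural `n`. -/
theorem mem_PW_iff_bernstein {V : Type*} [Fintype V] (G : SimpleGraph V)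
    [DecidableRel G.Adj] (hdeg : ∀ v : V, 0 < G.degree v)
    (ω : ℝ) (hω : 0 ≤ ω) (f : V → ℂ) :
    f ∈ PW G ω ↔ ∀ n : ℕ,
      Real.sqrt (∑ v, ‖(nLapL G ^ n) f v‖ ^ 2) ≤ ω ^ n * Real.sqrt (∑ v, ‖f v‖ ^ 2) :=
  mem_PW_iff_bernstein_general G ω hω f
end

section
/- Let G be a locally finite simple graph on a vertex set V in which every vertex has positive degree, and let 𝓛 be its normalized Laplacian. Let (S_j)_{j∈J} be a family of subsets of V such that the closed sets S_j ∪ bS_j (each S_j together with its vertex boundary bS_j, the set of vertices outside S_j adjacent to a vertex of S_j) are pairwise disjoint. Suppose each S_j is a Λ_j-set and that Λ := sup_j Λ_j is finite. Then the union S = ⋃_j S_j is a Λ-set: for every φ : V → ℂ supported in S with ∑_{v∈V}|φ(v)|² and ∑_{v∈V}|(𝓛φ)(v)|² finite, ∑_{v∈V}|φ(v)|² ≤ Λ²·∑_{v∈V}|(𝓛φ)(v)|². -/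
/-- The normalized Laplacian of a locally finite simple graph, acting on `f : V → ℂ`:
`(𝓛 f) v = f v − ∑_{u ∼ v} f u / √(d u · d v)`. -/
noncomputable def nLap {V : Type*} (G : SimpleGraph V) [G.LocallyFinite] (f : V → ℂ) (v : V) : ℂ :=
  f v - ∑ u ∈ G.neighborFinset v, f u / (Real.sqrt ((G.degree u : ℝ) * (G.degree v : ℝ)) : ℂ)

/-- The vertex boundary of a set of vertices: the vertices outside `S` adjacent to a vertex
of `S`. -/
def vertexBoundary {V : Type*} (G : SimpleGraph V) (S : Set V) : Set V :=
  {v : V | v ∉ S ∧ ∃ u ∈ S, G.Adj v u}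

/-!
Cut `φ` into the pieces `φ_j = 1_{S_j} φ`. The value `(𝓛 f)(v)` depends only on `f` at `v` and
its neighbours, and by disjointness of the closed sets a vertex of the support of `φ` at or next
to a point of `S_j ∪ bS_j` lies in `S_j`; hence `𝓛 φ_j = 1_{S_j ∪ bS_j} 𝓛 φ`. Then
`‖φ‖² = ∑ ‖φ_j‖² ≤ Λ² ∑ ‖𝓛 φ_j‖² ≤ Λ² ‖𝓛 φ‖²`, the last step again by disjointness.
-/

open Set Function

section Pieces

variable {ι α β E F : Type*} [SeminormedAddCommGroup E] [SeminormedAddCommGroup F]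

lemma ofReal_tsum_norm_sq {f : α → E} (hf : Summable fun a => ‖f a‖ ^ 2) :
    ENNReal.ofReal (∑' a, ‖f a‖ ^ 2) = ∑' a, ‖f a‖ₑ ^ 2 := by
  rw [ENNReal.ofReal_tsum_of_nonneg (fun _ => by positivity) hf]
  simp_rw [ENNReal.ofReal_pow (norm_nonneg _), ofReal_norm]

lemma tsum_norm_sq_le_mul_iff {f : α → E} {g : β → F} (hf : Summable fun a => ‖f a‖ ^ 2)
    (hg : Summable fun b => ‖g b‖ ^ 2) {c : ℝ} (hc : 0 ≤ c) :
    ∑' a, ‖f a‖ ^ 2 ≤ c * ∑' b, ‖g b‖ ^ 2 ↔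
      ∑' a, ‖f a‖ₑ ^ 2 ≤ ENNReal.ofReal c * ∑' b, ‖g b‖ₑ ^ 2 := by
  rw [← ofReal_tsum_norm_sq hf, ← ofReal_tsum_norm_sq hg, ← ENNReal.ofReal_mul hc,
    ENNReal.ofReal_le_ofReal_iff (mul_nonneg hc (tsum_nonneg fun _ => by positivity))]

lemma Summable.norm_sq_indicator {f : α → E} (hf : Summable fun a => ‖f a‖ ^ 2) (s : Set α) :
    Summable fun a => ‖s.indicator f a‖ ^ 2 :=
  hf.of_nonneg_of_le (fun _ => by positivity) fun a =>
    pow_le_pow_left₀ (norm_nonneg _) (norm_indicator_le_norm_self f a) 2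

lemma tsum_enorm_sq_indicator {T : ι → Set α} (hT : Pairwise (Disjoint on T)) (f : α → E)
    (a : α) : ∑' j, ‖(T j).indicator f a‖ₑ ^ 2 = (⋃ j, T j).indicator (‖f ·‖ₑ ^ 2) a := by
  rw [indicator_iUnion_of_pairwise_disjoint T hT]
  exact tsum_congr fun j =>
    (congrFun (indicator_comp_of_zero (g := fun x : E => ‖x‖ₑ ^ 2)
      (by simp [← ofReal_norm])) a).symm

lemma tsum_enorm_sq_le_of_pieces {T : ι → Set α} {U : ι → Set β}
    (hT : Pairwise (Disjoint on T)) (hU : Pairwise (Disjoint on U)) {f : α → E} {g : β → F}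
    (hf : support f ⊆ ⋃ j, T j) {c : ENNReal}
    (hpiece : ∀ j, ∑' a, ‖(T j).indicator f a‖ₑ ^ 2 ≤ c * ∑' b, ‖(U j).indicator g b‖ₑ ^ 2) :
    ∑' a, ‖f a‖ₑ ^ 2 ≤ c * ∑' b, ‖g b‖ₑ ^ 2 :=
  have hf' : support (‖f ·‖ₑ ^ 2) ⊆ ⋃ j, T j := fun a ha =>
    hf fun hfa => ha (by simp [hfa, ← ofReal_norm])
  calc ∑' a, ‖f a‖ₑ ^ 2 = ∑' j, ∑' a, ‖(T j).indicator f a‖ₑ ^ 2 := by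
        rw [ENNReal.tsum_comm]
        simp_rw [tsum_enorm_sq_indicator hT, indicator_eq_self.2 hf']
    _ ≤ ∑' j, c * ∑' b, ‖(U j).indicator g b‖ₑ ^ 2 := ENNReal.tsum_le_tsum hpiece
    _ = c * ∑' b, ∑' j, ‖(U j).indicator g b‖ₑ ^ 2 := by
        rw [ENNReal.tsum_mul_left, ENNReal.tsum_comm]
    _ ≤ c * ∑' b, ‖g b‖ₑ ^ 2 := by
        gcongr with b
        rw [tsum_enorm_sq_indicator hU]
        exact indicator_le_self _ _ b

end Pieces

section Graph

variable {V : Type*} (G : SimpleGraph V)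

def vertexClosure (S : Set V) : Set V :=
  S ∪ vertexBoundary G S

variable {G}

lemma subset_vertexClosure (S : Set V) : S ⊆ vertexClosure G S :=
  subset_union_left

lemma mem_vertexClosure_of_adj {S : Set V} {u v : V} (hu : u ∈ S) (huv : G.Adj v u) :
    v ∈ vertexClosure G S := by
  by_cases hv : v ∈ S
  · exact Or.inl hv
  · exact Or.inr ⟨hv, u, hu, huv⟩

variable [G.LocallyFinite]

lemma nLap_congr {f g : V → ℂ} {v : V} (hv : f v = g v) (hadj : ∀ u, G.Adj v u → f u = g u) :
    nLap G f v = nLap G g v := by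
  unfold nLap
  rw [hv, Finset.sum_congr rfl fun u hu => by rw [hadj u ((G.mem_neighborFinset v u).1 hu)]]

lemma nLap_indicator_of_notMem_vertexClosure {S : Set V} {v : V} (hv : v ∉ vertexClosure G S)
    (f : V → ℂ) : nLap G (S.indicator f) v = 0 := by
  have hvS : v ∉ S := fun h => hv (subset_vertexClosure S h)
  calc nLap G (S.indicator f) v = nLap G 0 v :=
        nLap_congr (indicator_of_notMem hvS f) fun u huv =>
          indicator_of_notMem (fun hu => hv (mem_vertexClosure_of_adj hu huv)) f
    _ = 0 := by simp [nLap]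

lemma nLap_indicator_of_pairwise_disjoint {ι : Type*} {S : ι → Set V}
    (hS : Pairwise (Disjoint on fun j => vertexClosure G (S j))) {φ : V → ℂ}
    (hφ : support φ ⊆ ⋃ j, S j) (j : ι) :
    nLap G ((S j).indicator φ) = (vertexClosure G (S j)).indicator (nLap G φ) := by
  ext v
  by_cases hv : v ∈ vertexClosure G (S j)
  swap
  · rw [indicator_of_notMem hv, nLap_indicator_of_notMem_vertexClosure hv]
  rw [indicator_of_mem hv]
  -- a vertex of `⋃ S_i` at or next to `v` can only lie in `S_j`, else `v` is in two closures
  have hnear : ∀ w, (w = v ∨ G.Adj v w) → (S j).indicator φ w = φ w := by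
    intro w hw
    by_cases hwS : w ∈ S j
    · exact indicator_of_mem hwS φ
    rw [indicator_of_notMem hwS, eq_comm, ← notMem_support]
    intro hwφ
    obtain ⟨i, hi⟩ := mem_iUnion.1 (hφ hwφ)
    have hij : i ≠ j := by rintro rfl; exact hwS hi
    have hvi : v ∈ vertexClosure G (S i) := by
      rcases hw with rfl | hadj
      · exact subset_vertexClosure _ hi
      · exact mem_vertexClosure_of_adj hi hadj
    exact disjoint_left.1 (hS hij) hvi hv
  exact nLap_congr (hnear v (Or.inl rfl)) fun u huv => hnear u (Or.inr huv)

variable (G) in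
def IsLambdaSet (S : Set V) (Λ : ℝ) : Prop :=
  ∀ φ : V → ℂ, (∀ v, v ∉ S → φ v = 0) →
    Summable (fun v => ‖φ v‖ ^ 2) → Summable (fun v => ‖nLap G φ v‖ ^ 2) →
    Real.sqrt (∑' v, ‖φ v‖ ^ 2) ≤ Λ * Real.sqrt (∑' v, ‖nLap G φ v‖ ^ 2)

lemma IsLambdaSet.tsum_norm_sq_le {S : Set V} {Λ₀ Λ : ℝ} (hS : IsLambdaSet G S Λ₀)
    (hΛ : Λ₀ ≤ Λ) {φ : V → ℂ} (hφ : ∀ v, v ∉ S → φ v = 0)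
    (h1 : Summable fun v => ‖φ v‖ ^ 2) (h2 : Summable fun v => ‖nLap G φ v‖ ^ 2) :
    ∑' v, ‖φ v‖ ^ 2 ≤ Λ ^ 2 * ∑' v, ‖nLap G φ v‖ ^ 2 := by
  have h := (hS φ hφ h1 h2).trans (mul_le_mul_of_nonneg_right hΛ (Real.sqrt_nonneg _))
  rw [Real.sqrt_le_iff, mul_pow, Real.sq_sqrt (tsum_nonneg fun _ => by positivity)] at h
  exact h.2

end Graph

theorem union_of_lambda_sets_general {V : Type*} (G : SimpleGraph V) [G.LocallyFinite]
    {J : Type*} (S : J → Set V) (Λf : J → ℝ)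
    (hdisj : ∀ i j : J, i ≠ j →
      Disjoint (S i ∪ vertexBoundary G (S i)) (S j ∪ vertexBoundary G (S j)))
    (hset : ∀ j, ∀ φ : V → ℂ, (∀ v, v ∉ S j → φ v = 0) →
      Summable (fun v => ‖φ v‖ ^ 2) → Summable (fun v => ‖nLap G φ v‖ ^ 2) →
      Real.sqrt (∑' v, ‖φ v‖ ^ 2) ≤ Λf j * Real.sqrt (∑' v, ‖nLap G φ v‖ ^ 2))
    (hbdd : BddAbove (Set.range Λf))
    (φ : V → ℂ) (hsupp : ∀ v, v ∉ ⋃ j, S j → φ v = 0)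
    (hsum1 : Summable fun v => ‖φ v‖ ^ 2)
    (hsum2 : Summable fun v => ‖nLap G φ v‖ ^ 2) :
    (∑' v, ‖φ v‖ ^ 2) ≤ (⨆ j, Λf j) ^ 2 * ∑' v, ‖nLap G φ v‖ ^ 2 := by
  have hclosure : Pairwise (Disjoint on fun j => vertexClosure G (S j)) := hdisj
  have hS : Pairwise (Disjoint on S) := hclosure.mono fun _ _ h =>
    h.mono (subset_vertexClosure _) (subset_vertexClosure _)
  have hφ : support φ ⊆ ⋃ j, S j := fun v hv => by_contra fun h => hv (hsupp v h)
  rw [tsum_norm_sq_le_mul_iff hsum1 hsum2 (sq_nonneg _)]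
  refine tsum_enorm_sq_le_of_pieces hS hclosure hφ fun j => ?_
  have hpiece := nLap_indicator_of_pairwise_disjoint hclosure hφ j
  have hsum2' : Summable fun v => ‖nLap G ((S j).indicator φ) v‖ ^ 2 :=
    hpiece ▸ hsum2.norm_sq_indicator _
  rw [← hpiece, ← tsum_norm_sq_le_mul_iff (hsum1.norm_sq_indicator _) hsum2' (sq_nonneg _)]
  exact IsLambdaSet.tsum_norm_sq_le (hset j) (le_ciSup hbdd j)
    (fun v hv => indicator_of_notMem hv φ) (hsum1.norm_sq_indicator _) hsum2'

/-- If the closures `S_j ∪ bS_j` are pairwise disjoint, each `S_j` is a `Λ_j`-set,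
and `Λ = ⨆ j, Λ_j` is finite, then `⋃ j, S_j` is a `Λ`-set. -/
theorem union_of_lambda_sets {V : Type*} (G : SimpleGraph V) [G.LocallyFinite]
    (hdeg : ∀ v : V, 0 < G.degree v)
    {J : Type*} (S : J → Set V) (Λf : J → ℝ) (hΛpos : ∀ j, 0 < Λf j)
    (hdisj : ∀ i j : J, i ≠ j →
      Disjoint (S i ∪ vertexBoundary G (S i)) (S j ∪ vertexBoundary G (S j)))
    (hset : ∀ j, ∀ φ : V → ℂ, (∀ v, v ∉ S j → φ v = 0) →
      Summable (fun v => ‖φ v‖ ^ 2) → Summable (fun v => ‖nLap G φ v‖ ^ 2) →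
      Real.sqrt (∑' v, ‖φ v‖ ^ 2) ≤ Λf j * Real.sqrt (∑' v, ‖nLap G φ v‖ ^ 2))
    (hbdd : BddAbove (Set.range Λf))
    (φ : V → ℂ) (hsupp : ∀ v, v ∉ ⋃ j, S j → φ v = 0)
    (hsum1 : Summable fun v => ‖φ v‖ ^ 2)
    (hsum2 : Summable fun v => ‖nLap G φ v‖ ^ 2) :
    (∑' v, ‖φ v‖ ^ 2) ≤ (⨆ j, Λf j) ^ 2 * ∑' v, ‖nLap G φ v‖ ^ 2 :=
  union_of_lambda_sets_general G S Λf hdisj hset hbdd φ hsupp hsum1 hsum2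
end

section
/- Let N, M ≥ 1 be natural numbers and let S = {1, …, N} × {1, …, M} ⊆ ℤ² be a rectangle of vertices of the lattice graph ℤ². Then for every φ : ℤ² → ℂ with support contained in S, (∑_{v∈ℤ²} |φ(v)|²)^{1/2} ≤ (1/2)·sin^{−2}(π/(2·max(N,M)+2))·(∑_{v∈ℤ²} |(𝓛φ)(v)|²)^{1/2}, where 𝓛 is the normalized Laplacian of ℤ². -/
open scoped Real

/-- The normalized Laplacian of the lattice graph `ℤ²`:
`(𝓛 f)(k,l) = f(k,l) − (f(k−1,l) + f(k+1,l) + f(k,l−1) + f(k,l+1))/4`. -/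
noncomputable def lapZ2 (f : ℤ × ℤ → ℂ) (p : ℤ × ℤ) : ℂ :=
  f p - (f (p.1 - 1, p.2) + f (p.1 + 1, p.2) + f (p.1, p.2 - 1) + f (p.1, p.2 + 1)) / 4

/-!
Let `K = max N M` and `θ = π / (K + 1)`. The function `w (k, l) = sin (k θ)` is positive on the
strip `1 ≤ k ≤ K`, nonnegative on its neighbours, and satisfies
`w (p - e₁) + w (p + e₁) = 2 cos θ · w p`. Writing `|φ| = w · (|φ| / w)` and applying weighted
AM–GM to every horizontal edge gives `∑ |φ p| (|φ (p - e₁)| + |φ (p + e₁)|) ≤ 2 cos θ ‖φ‖²`,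
and the same holds vertically. Since `𝓛 φ = φ - (sum of the four neighbours) / 4`, this yields
`(1 - cos θ) ‖φ‖² ≤ ∑ |φ| |𝓛 φ| ≤ ‖φ‖ ‖𝓛 φ‖`, and `1 - cos θ = 2 sin² (π / (2K + 2))`.
-/

open Function Real

lemma two_mul_le_sq_div_mul_add_sq_div_mul {a b x y : ℝ} (ha : a ≠ 0 → 0 < x ∧ 0 ≤ y)
    (hb : b ≠ 0 → 0 < y ∧ 0 ≤ x) : 2 * (a * b) ≤ a ^ 2 / x * y + b ^ 2 / y * x := by
  rcases eq_or_ne a 0 with rfl | ha0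
  · rcases eq_or_ne b 0 with rfl | hb0
    · simp
    · obtain ⟨hy, hx⟩ := hb hb0
      norm_num
      positivity
  rcases eq_or_ne b 0 with rfl | hb0
  · obtain ⟨hx, hy⟩ := ha ha0
    norm_num
    positivity
  obtain ⟨hx, -⟩ := ha ha0
  obtain ⟨hy, -⟩ := hb hb0
  rw [div_mul_eq_mul_div, div_mul_eq_mul_div, div_add_div _ _ hx.ne' hy.ne',
    le_div_iff₀ (by positivity)]
  nlinarith [sq_nonneg (a * y - b * x)]

lemma Function.HasFiniteSupport.summable_mul {α : Type*} {f : α → ℝ} (hf : f.HasFiniteSupport)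
    (g : α → ℝ) : Summable fun a => f a * g a :=
  summable_of_hasFiniteSupport (hf.fun_mul_left g)

theorem tsum_mul_neighbors_le_of_pos_eigenfunction {G : Type*} [AddCommGroup G] {A w : G → ℝ}
    {c : ℝ} {v : G} (hA : A.HasFiniteSupport)
    (hw : ∀ p, A p ≠ 0 → 0 < w p ∧ 0 ≤ w (p - v) ∧ 0 ≤ w (p + v))
    (hc : ∀ p, w (p - v) + w (p + v) = c * w p) :
    ∑' p, A p * (A (p - v) + A (p + v)) ≤ c * ∑' p, A p ^ 2 := by
  set r : G → ℝ := fun p => A p ^ 2 / w p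
  have hr : r.HasFiniteSupport := hA.subset fun p hp => by
    contrapose hp
    simp_all [r]
  have hrw : ∀ p, r p * w p = A p ^ 2 := fun p => by
    rcases eq_or_ne (A p) 0 with h | h
    · simp [r, h]
    · exact div_mul_cancel₀ _ (hw p h).1.ne'
  have hpt : ∀ p, 2 * (A p * A (p + v)) ≤ r p * w (p + v) + r (p + v) * w p := fun p =>
    two_mul_le_sq_div_mul_add_sq_div_mul (fun h => ⟨(hw p h).1, (hw p h).2.2⟩)
      (fun h => ⟨(hw _ h).1, by simpa using (hw _ h).2.1⟩)
  have hsymm : ∑' p, A p * A (p - v) = ∑' p, A p * A (p + v) := by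
    rw [← (Equiv.addRight v).tsum_eq]
    simp [mul_comm]
  have hshift : ∑' p, r (p + v) * w p = ∑' p, r p * w (p - v) := by
    rw [← (Equiv.subRight v).tsum_eq]
    simp
  have hrv : (fun p => r (p + v)).HasFiniteSupport := hr.comp_of_injective (add_left_injective v)
  calc ∑' p, A p * (A (p - v) + A (p + v))
      = ∑' p, 2 * (A p * A (p + v)) := by
        simp_rw [mul_add]
        rw [(hA.summable_mul _).tsum_add (hA.summable_mul _), hsymm, tsum_mul_left]
        ring
    _ ≤ ∑' p, (r p * w (p + v) + r (p + v) * w p) :=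
        ((hA.summable_mul _).mul_left 2).tsum_le_tsum hpt
          ((hr.summable_mul _).add (hrv.summable_mul _))
    _ = ∑' p, r p * (c * w p) := by
        rw [(hr.summable_mul _).tsum_add (hrv.summable_mul _), hshift,
          ← (hr.summable_mul _).tsum_add (hr.summable_mul _)]
        simp_rw [← hc, mul_add, add_comm]
    _ = c * ∑' p, A p ^ 2 := by
        simp_rw [← hrw, ← tsum_mul_left, mul_left_comm c]

lemma sin_mul_pi_div_pos {t n : ℝ} (ht : 0 < t) (htn : t < n) : 0 < sin (t * (π / n)) := by
  have hn : 0 < n := ht.trans htn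
  apply sin_pos_of_pos_of_lt_pi (by positivity)
  rw [mul_div_left_comm]
  exact mul_lt_of_lt_one_right pi_pos ((div_lt_one hn).2 htn)

lemma sin_mul_pi_div_nonneg {t n : ℝ} (ht : 0 ≤ t) (htn : t ≤ n) : 0 ≤ sin (t * (π / n)) := by
  have hn : 0 ≤ n := ht.trans htn
  apply sin_nonneg_of_nonneg_of_le_pi (by positivity)
  rw [mul_div_left_comm]
  exact mul_le_of_le_one_right pi_pos.le (div_le_one_of_le₀ htn hn)

lemma sin_sub_add_sin_add (a θ : ℝ) : sin (a - θ) + sin (a + θ) = 2 * cos θ * sin a := by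
  rw [sin_sub, sin_add]
  ring

theorem tsum_norm_mul_horizontal_neighbors_le {K : ℕ} {φ : ℤ × ℤ → ℂ}
    (hφ : φ.HasFiniteSupport) (hK : ∀ p, φ p ≠ 0 → 1 ≤ p.1 ∧ p.1 ≤ K) :
    ∑' p, ‖φ p‖ * (‖φ (p.1 - 1, p.2)‖ + ‖φ (p.1 + 1, p.2)‖) ≤
      2 * cos (π / (K + 1)) * ∑' p, ‖φ p‖ ^ 2 := by
  set θ := π / (K + 1)
  have hw : ∀ p : ℤ × ℤ, ‖φ p‖ ≠ 0 →
      0 < sin (p.1 * θ) ∧ 0 ≤ sin ((p - (1, 0)).1 * θ) ∧ 0 ≤ sin ((p + (1, 0)).1 * θ) := by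
    intro p hp
    obtain ⟨h1, h2⟩ := hK p (norm_ne_zero_iff.1 hp)
    simp only [Prod.fst_sub, Prod.fst_add]
    refine ⟨sin_mul_pi_div_pos ?_ ?_, sin_mul_pi_div_nonneg ?_ ?_, sin_mul_pi_div_nonneg ?_ ?_⟩ <;>
      norm_cast <;> omega
  have hc : ∀ p : ℤ × ℤ,
      sin ((p - (1, 0)).1 * θ) + sin ((p + (1, 0)).1 * θ) = 2 * cos θ * sin (p.1 * θ) := by
    intro p
    simp only [Prod.fst_sub, Prod.fst_add]
    push_cast
    rw [sub_mul, add_mul, one_mul, sin_sub_add_sin_add]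
  simpa [Prod.sub_def, Prod.add_def] using
    tsum_mul_neighbors_le_of_pos_eigenfunction (by fun_prop (disch := simp)) hw hc

theorem tsum_norm_mul_neighbors_le {K : ℕ} {φ : ℤ × ℤ → ℂ}
    (hφ : φ.support ⊆ Set.Icc 1 (K : ℤ) ×ˢ Set.Icc 1 (K : ℤ)) :
    ∑' p, ‖φ p‖ * (‖φ (p.1 - 1, p.2)‖ + ‖φ (p.1 + 1, p.2)‖ + ‖φ (p.1, p.2 - 1)‖ +
      ‖φ (p.1, p.2 + 1)‖) ≤ 4 * cos (π / (K + 1)) * ∑' p, ‖φ p‖ ^ 2 := by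
  have hfin : φ.HasFiniteSupport := ((Set.finite_Icc _ _).prod (Set.finite_Icc _ _)).subset hφ
  have hnorm : (fun p => ‖φ p‖).HasFiniteSupport := hfin.fun_comp norm_zero
  have hrow := tsum_norm_mul_horizontal_neighbors_le hfin fun p hp => (hφ hp).1
  have hcol : ∑' p, ‖φ p‖ * (‖φ (p.1, p.2 - 1)‖ + ‖φ (p.1, p.2 + 1)‖) ≤
      2 * cos (π / (K + 1)) * ∑' p, ‖φ p‖ ^ 2 := by
    rw [← (Equiv.prodComm ℤ ℤ).tsum_eq, ← (Equiv.prodComm ℤ ℤ).tsum_eq (fun p => ‖φ p‖ ^ 2)]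
    exact tsum_norm_mul_horizontal_neighbors_le (φ := φ ∘ Prod.swap)
      (hfin.comp_of_injective Prod.swap_injective) fun p hp => (hφ hp).2
  calc _ = ∑' p, ‖φ p‖ * (‖φ (p.1 - 1, p.2)‖ + ‖φ (p.1 + 1, p.2)‖) +
        ∑' p, ‖φ p‖ * (‖φ (p.1, p.2 - 1)‖ + ‖φ (p.1, p.2 + 1)‖) := by
        rw [← (hnorm.summable_mul _).tsum_add (hnorm.summable_mul _)]
        simp_rw [← mul_add, add_assoc]
    _ ≤ _ := by linarith

lemma tsum_norm_sq_sub_le_tsum_norm_mul_norm_lapZ2 {φ : ℤ × ℤ → ℂ} (hφ : φ.HasFiniteSupport) :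
    ∑' p, ‖φ p‖ ^ 2 - (∑' p, ‖φ p‖ * (‖φ (p.1 - 1, p.2)‖ + ‖φ (p.1 + 1, p.2)‖ +
      ‖φ (p.1, p.2 - 1)‖ + ‖φ (p.1, p.2 + 1)‖)) / 4 ≤ ∑' p, ‖φ p‖ * ‖lapZ2 φ p‖ := by
  have hnorm : (fun p => ‖φ p‖).HasFiniteSupport := hφ.fun_comp norm_zero
  have hsq : Summable fun p => ‖φ p‖ ^ 2 := by simpa [sq] using hnorm.summable_mul fun p => ‖φ p‖
  rw [← tsum_div_const, ← hsq.tsum_sub ((hnorm.summable_mul _).div_const 4)]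
  refine (hsq.sub ((hnorm.summable_mul _).div_const 4)).tsum_le_tsum (fun p => ?_)
    (hnorm.summable_mul _)
  have hs : ‖φ (p.1 - 1, p.2) + φ (p.1 + 1, p.2) + φ (p.1, p.2 - 1) + φ (p.1, p.2 + 1)‖ ≤
      ‖φ (p.1 - 1, p.2)‖ + ‖φ (p.1 + 1, p.2)‖ + ‖φ (p.1, p.2 - 1)‖ + ‖φ (p.1, p.2 + 1)‖ :=
    norm_add₄_le
  have hz := norm_sub_norm_le (φ p)
    ((φ (p.1 - 1, p.2) + φ (p.1 + 1, p.2) + φ (p.1, p.2 - 1) + φ (p.1, p.2 + 1)) / 4)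
  rw [norm_div, Complex.norm_ofNat] at hz
  rw [lapZ2, sq, mul_div_assoc, ← mul_sub]
  gcongr
  linarith

theorem tsum_mul_le_sqrt_mul_sqrt {ι : Type*} {f g : ι → ℝ} (hf : f.HasFiniteSupport)
    (hg : g.HasFiniteSupport) :
    ∑' i, f i * g i ≤ √(∑' i, f i ^ 2) * √(∑' i, g i ^ 2) := by
  classical
  set s := Set.Finite.toFinset (s := f.support ∪ g.support) (Set.Finite.union hf hg)
  rw [tsum_eq_sum (s := s), tsum_eq_sum (s := s), tsum_eq_sum (s := s)]
  · exact Real.sum_mul_le_sqrt_mul_sqrt s f g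
  all_goals
    intro i hi
    simp only [s, Set.Finite.mem_toFinset, Set.mem_union, Function.mem_support, not_or,
      not_not] at hi
    simp [hi.1, hi.2]

lemma sqrt_le_inv_mul_sqrt_of_mul_le {a b c : ℝ} (hc : 0 < c) (ha : 0 ≤ a)
    (h : c * a ≤ √a * √b) : √a ≤ c⁻¹ * √b := by
  rcases (sqrt_nonneg a).eq_or_lt with h0 | hpos
  · rw [← h0]
    positivity
  rw [le_inv_mul_iff₀ hc]
  refine le_of_mul_le_mul_right ?_ hpos
  rwa [mul_assoc, mul_self_sqrt ha, mul_comm (√b)]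

lemma Function.HasFiniteSupport.lapZ2 {φ : ℤ × ℤ → ℂ} (hφ : φ.HasFiniteSupport) :
    (lapZ2 φ).HasFiniteSupport := by
  unfold _root_.lapZ2
  fun_prop (disch := first | simp | (intro a b h; simp_all [Prod.ext_iff]))

theorem rectangle_lambda_set_general (N M : ℕ) (φ : ℤ × ℤ → ℂ)
    (hsupp : ∀ p : ℤ × ℤ, p ∉ Set.Icc (1 : ℤ) N ×ˢ Set.Icc (1 : ℤ) M → φ p = 0) :
    Real.sqrt (∑' p : ℤ × ℤ, ‖φ p‖ ^ 2) ≤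
      (1 / 2) * (Real.sin (π / (2 * max N M + 2)))⁻¹ ^ 2 *
        Real.sqrt (∑' p : ℤ × ℤ, ‖lapZ2 φ p‖ ^ 2) := by
  set K := max N M
  have hφ : φ.support ⊆ Set.Icc 1 (K : ℤ) ×ˢ Set.Icc 1 (K : ℤ) := fun p hp =>
    Set.prod_mono (Set.Icc_subset_Icc_right (by exact_mod_cast le_max_left N M))
      (Set.Icc_subset_Icc_right (by exact_mod_cast le_max_right N M))
      (not_not.1 (mt (hsupp p) hp))
  have hfin : φ.HasFiniteSupport := ((Set.finite_Icc _ _).prod (Set.finite_Icc _ _)).subset hφ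
  have hsin : 0 < sin (π / (2 * K + 2)) :=
    sin_pos_of_pos_of_lt_pi (by positivity)
      (div_lt_self pi_pos (by linarith [K.cast_nonneg (α := ℝ)]))
  have hcos : 1 - cos (π / (K + 1)) = 2 * sin (π / (2 * K + 2)) ^ 2 := by
    rw [show π / (K + 1) = 2 * (π / (2 * K + 2)) by field_simp, cos_two_mul, cos_sq']
    ring
  have hCS := tsum_mul_le_sqrt_mul_sqrt (f := fun p => ‖φ p‖) (g := fun p => ‖lapZ2 φ p‖)
    (hfin.fun_comp norm_zero) (hfin.lapZ2.fun_comp norm_zero)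
  have hE := tsum_norm_sq_sub_le_tsum_norm_mul_norm_lapZ2 hfin
  have hN := tsum_norm_mul_neighbors_le hφ
  rw [show 1 / 2 * (sin (π / (2 * K + 2)))⁻¹ ^ 2 = (2 * sin (π / (2 * K + 2)) ^ 2)⁻¹ by
    rw [mul_inv, inv_pow]; norm_num]
  refine sqrt_le_inv_mul_sqrt_of_mul_le (by positivity) (tsum_nonneg fun p => by positivity) ?_
  rw [← hcos]
  linarith

/-- A rectangle `S = {1,…,N} × {1,…,M}` of vertices of `ℤ²` is a `Λ`-set with
`Λ = (1/2)·sin⁻²(π/(2·max(N,M)+2))`. -/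
theorem rectangle_lambda_set (N M : ℕ) (hN : 1 ≤ N) (hM : 1 ≤ M) (φ : ℤ × ℤ → ℂ)
    (hsupp : ∀ p : ℤ × ℤ, p ∉ Set.Icc (1 : ℤ) N ×ˢ Set.Icc (1 : ℤ) M → φ p = 0) :
    Real.sqrt (∑' p : ℤ × ℤ, ‖φ p‖ ^ 2) ≤
      (1 / 2) * (Real.sin (π / (2 * max N M + 2)))⁻¹ ^ 2 *
        Real.sqrt (∑' p : ℤ × ℤ, ‖lapZ2 φ p‖ ^ 2) :=
  rectangle_lambda_set_general N M φ hsupp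
end
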